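/- Let M be a cancellative Noetherian monoid and δ a balanced element. Then the set of atoms dividing δ is permuted by conjugation by δ: for every atom s left-dividing δ there is an atom t left-dividing δ with s·δ = δ·t. -/

import Mathlib

namespace Garside

variable {M : Type*}

/-- left-divisibility -/
def LDvd [Monoid M] (a b : M) : Prop := ∃ c, b = a * c

/-- right-divisibility -/
def RDvd [Monoid M] (a b : M) : Prop := ∃ c, b = c * a

/-- Noetherian: lengths of factorizations into non-identity factors are bounded. -/
def NoetherianM (M : Type*) [Monoid M] : Prop :=
  ∀ g : M, ∃ N : ℕ, ∀ l : List M, l.prod = g → (∀ x ∈ l, x ≠ 1) → l.length ≤ N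

/-- balanced element: left divisors = right divisors -/
def Balanced [Monoid M] (δ : M) : Prop := ∀ g : M, LDvd g δ ↔ RDvd g δ

/-- the set of (left-)divisors of a (balanced) element -/
def D [Monoid M] (δ : M) : Set M := {g | LDvd g δ}

/-- atom of a monoid -/
def IsAtomM [Monoid M] (h : M) : Prop := h ≠ 1 ∧ ∀ g k : M, h = g * k → g = 1 ∨ k = 1

/-- support of a balanced element: atoms dividing it -/
def suppM [Monoid M] (δ : M) : Set M := {s | IsAtomM s ∧ LDvd s δ}

/-- A Garside monoid structure on a cancellative monoid. -/
structure GarsideMonoid (M : Type*) [CancelMonoid M] where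
  noeth : NoetherianM M
  wedgeL : M → M → M
  wedgeL_dvd_left : ∀ a b, LDvd (wedgeL a b) a
  wedgeL_dvd_right : ∀ a b, LDvd (wedgeL a b) b
  le_wedgeL : ∀ a b c, LDvd c a → LDvd c b → LDvd c (wedgeL a b)
  veeL : M → M → M
  dvd_veeL_left : ∀ a b, LDvd a (veeL a b)
  dvd_veeL_right : ∀ a b, LDvd b (veeL a b)
  veeL_le : ∀ a b c, LDvd a c → LDvd b c → LDvd (veeL a b) c
  wedgeR : M → M → M
  wedgeR_dvd_left : ∀ a b, RDvd (wedgeR a b) a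
  wedgeR_dvd_right : ∀ a b, RDvd (wedgeR a b) b
  le_wedgeR : ∀ a b c, RDvd c a → RDvd c b → RDvd c (wedgeR a b)
  veeR : M → M → M
  dvd_veeR_left : ∀ a b, RDvd a (veeR a b)
  dvd_veeR_right : ∀ a b, RDvd b (veeR a b)
  veeR_le : ∀ a b c, RDvd a c → RDvd b c → RDvd (veeR a b) c
  Δ : M
  balanced : Balanced Δ
  finD : (D Δ).Finite
  gen : Submonoid.closure (D Δ) = ⊤

variable [CancelMonoid M]

/-- head function (left) -/
def GarsideMonoid.αL (G : GarsideMonoid M) (w : M) : M := G.wedgeL w G.Δ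

/-- head function (right) -/
def GarsideMonoid.αR (G : GarsideMonoid M) (w : M) : M := G.wedgeR w G.Δ

/-- Garside submonoid: a sublattice submonoid closed under the head maps. -/
def IsGarsideSubmonoid (G : GarsideMonoid M) (H : Submonoid M) : Prop :=
  (∀ a ∈ H, ∀ b ∈ H,
      G.wedgeL a b ∈ H ∧ G.veeL a b ∈ H ∧ G.wedgeR a b ∈ H ∧ G.veeR a b ∈ H) ∧
  (∀ h ∈ H, G.αL h ∈ H ∧ G.αR h ∈ H)

/-- least upper bound of a set for left-divisibility -/
def IsLubL (S : Set M) (δ : M) : Prop :=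
  (∀ x ∈ S, LDvd x δ) ∧ ∀ c, (∀ x ∈ S, LDvd x c) → LDvd δ c

/-- least upper bound of a set for right-divisibility -/
def IsLubR (S : Set M) (δ : M) : Prop :=
  (∀ x ∈ S, RDvd x δ) ∧ ∀ c, (∀ x ∈ S, RDvd x c) → RDvd δ c

/-!
Balancedness makes conjugation by `δ` act on the divisors of `δ`: if `x` divides `δ`, then
`δ = y * x = x' * y` for some `y` and `x'`, whence `x' * δ = δ * x`. This conjugation is
multiplicative and, by cancellativity, sends only `1` to `1`, so a factorization `t = g * k`
of the conjugate `t` of an atom `s` conjugates back to a factorization of `s`.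
-/

section Monoid

variable {M : Type*} [Monoid M] {a b c δ : M}

theorem ldvd_mul_right (a b : M) : LDvd a (a * b) := ⟨b, rfl⟩

theorem rdvd_mul_left (a b : M) : RDvd b (a * b) := ⟨a, rfl⟩

theorem LDvd.trans (hab : LDvd a b) (hbc : LDvd b c) : LDvd a c := by
  obtain ⟨x, rfl⟩ := hab
  obtain ⟨y, rfl⟩ := hbc
  exact ⟨x * y, mul_assoc a x y⟩

theorem RDvd.trans (hab : RDvd a b) (hbc : RDvd b c) : RDvd a c := by
  obtain ⟨x, rfl⟩ := hab
  obtain ⟨y, rfl⟩ := hbc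
  exact ⟨y * x, (mul_assoc y x a).symm⟩

theorem Balanced.exists_mul_eq_mul_left (hδ : Balanced δ) {x : M} (hx : LDvd x δ) :
    ∃ x', x' * δ = δ * x := by
  obtain ⟨y, hy⟩ := (hδ x).mp hx
  obtain ⟨x', hx'⟩ := (hδ y).mp ⟨x, hy⟩
  exact ⟨x', by nth_rw 1 [hy]; rw [← mul_assoc, ← hx']⟩

theorem Balanced.exists_mul_eq_mul_right (hδ : Balanced δ) {s : M} (hs : LDvd s δ) :
    ∃ t, LDvd t δ ∧ s * δ = δ * t := by
  obtain ⟨u, hu⟩ := hs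
  obtain ⟨t, ht⟩ := (hδ u).mpr ⟨s, hu⟩
  exact ⟨t, (hδ t).mpr ⟨u, ht⟩, by nth_rw 1 [ht]; rw [← mul_assoc, ← hu]⟩

end Monoid

section CancelMonoid

variable {M : Type*} [CancelMonoid M] {δ : M}

theorem eq_one_iff_of_mul_eq_mul {a b : M} (h : a * δ = δ * b) : a = 1 ↔ b = 1 := by
  constructor
  · rintro rfl
    exact (mul_left_cancel (a := δ) (by rw [← h, one_mul, mul_one])).symm
  · rintro rfl
    exact mul_right_cancel (b := δ) (by rw [h, one_mul, mul_one])

theorem Balanced.isAtomM_of_mul_eq_mul (hδ : Balanced δ) {s t : M} (hs : IsAtomM s)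
    (ht : LDvd t δ) (hst : s * δ = δ * t) : IsAtomM t := by
  refine ⟨fun ht1 => hs.1 ((eq_one_iff_of_mul_eq_mul hst).mpr ht1), fun g k hgk => ?_⟩
  subst hgk
  have hg : LDvd g δ := (ldvd_mul_right g k).trans ht
  have hk : LDvd k δ := (hδ k).mpr ((rdvd_mul_left g k).trans ((hδ _).mp ht))
  obtain ⟨g', hg'⟩ := hδ.exists_mul_eq_mul_left hg
  obtain ⟨k', hk'⟩ := hδ.exists_mul_eq_mul_left hk
  have hs_eq : s = g' * k' := mul_right_cancel <| calc
    s * δ = δ * g * k := by rw [hst, mul_assoc]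
    _ = g' * k' * δ := by rw [← hg', mul_assoc, ← hk', mul_assoc]
  exact (hs.2 g' k' hs_eq).imp (eq_one_iff_of_mul_eq_mul hg').mp (eq_one_iff_of_mul_eq_mul hk').mp

end CancelMonoid

theorem atoms_of_support_permuted_by_conjugation_general {M : Type*} [CancelMonoid M]
    (δ : M) (hδ : Balanced δ)
    (s : M) (hs : IsAtomM s) (hsδ : LDvd s δ) :
    ∃ t : M, IsAtomM t ∧ LDvd t δ ∧ s * δ = δ * t := by
  obtain ⟨t, htδ, hst⟩ := hδ.exists_mul_eq_mul_right hsδ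
  exact ⟨t, hδ.isAtomM_of_mul_eq_mul hs htδ hst, htδ, hst⟩

theorem atoms_of_support_permuted_by_conjugation {M : Type*} [CancelMonoid M]
    (hN : NoetherianM M) (δ : M) (hδ : Balanced δ)
    (s : M) (hs : IsAtomM s) (hsδ : LDvd s δ) :
    ∃ t : M, IsAtomM t ∧ LDvd t δ ∧ s * δ = δ * t :=
  atoms_of_support_permuted_by_conjugation_general δ hδ s hs hsδ
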